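/- Let (L, (h_1, h_2)) be a backward self-similar system with m = 2 such that L_x is connected for every infinite word x ∈ {1, 2}^ℕ, and suppose that L is disconnected. Then h_1⁻¹(L) ∩ h_2⁻¹(L) = ∅, there is a bijection between the set of connected components of L and {1, 2}^ℕ, and in particular L has uncountably many connected components. -/
import Mathlib


open Set

/-- `h_w⁻¹(L)` for a finite word `w = (w₁, …, w_k)`, encoded as the list `[w₁, …, w_k]`,
namely `h_{w₁}⁻¹(h_{w₂}⁻¹(⋯ h_{w_k}⁻¹(L) ⋯))`. -/
def bwdPre {X : Type*} {m : ℕ} (h : Fin m → X → X) (L : Set X) : List (Fin m) → Set X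
  | [] => L
  | a :: w => h a ⁻¹' bwdPre h L w

/-- The truncation `x|k` of an infinite word `x`. -/
def wordTrunc {m : ℕ} (x : ℕ → Fin m) (k : ℕ) : List (Fin m) :=
  List.ofFn fun i : Fin k => x i.val

/-- `L_x = ⋂_{j ≥ 1} h_{x|j}⁻¹(L)`. -/
def bwdLimSet {X : Type*} {m : ℕ} (h : Fin m → X → X) (L : Set X) (x : ℕ → Fin m) : Set X :=
  ⋂ j : ℕ, bwdPre h L (wordTrunc x (j + 1))

section Aux

variable {X : Type*} {m : ℕ}

@[simp] lemma bwdPre_nil (h : Fin m → X → X) (S : Set X) : bwdPre h S [] = S := rfl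

@[simp] lemma bwdPre_cons (h : Fin m → X → X) (S : Set X) (a : Fin m) (w : List (Fin m)) :
    bwdPre h S (a :: w) = h a ⁻¹' bwdPre h S w := rfl

lemma bwdPre_mono (h : Fin m → X → X) {S T : Set X} (hST : S ⊆ T) :
    ∀ w, bwdPre h S w ⊆ bwdPre h T w
  | [] => hST
  | _ :: w => preimage_mono (bwdPre_mono h hST w)

lemma bwdPre_inter (h : Fin m → X → X) (S T : Set X) :
    ∀ w, bwdPre h (S ∩ T) w = bwdPre h S w ∩ bwdPre h T w
  | [] => rfl
  | a :: w => by simp [bwdPre_inter h S T w, preimage_inter]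

lemma bwdPre_union (h : Fin m → X → X) (S T : Set X) :
    ∀ w, bwdPre h (S ∪ T) w = bwdPre h S w ∪ bwdPre h T w
  | [] => rfl
  | a :: w => by simp [bwdPre_union h S T w, preimage_union]

lemma bwdPre_empty (h : Fin m → X → X) : ∀ w, bwdPre h (∅ : Set X) w = ∅
  | [] => rfl
  | a :: w => by simp [bwdPre_empty h w]

lemma bwdPre_append (h : Fin m → X → X) (S : Set X) :
    ∀ w w', bwdPre h S (w ++ w') = bwdPre h (bwdPre h S w') w
  | [], _ => rfl
  | a :: w, w' => by simp [bwdPre_append h S w w']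

lemma wordTrunc_zero (x : ℕ → Fin m) : wordTrunc x 0 = [] := rfl

lemma wordTrunc_succ (x : ℕ → Fin m) (k : ℕ) :
    wordTrunc x (k + 1) = wordTrunc x k ++ [x k] := by
  unfold wordTrunc
  rw [List.ofFn_succ']
  simp [List.concat_eq_append]

lemma exists_word_seq (P : List (Fin m) → Prop) (h0 : P [])
    (hstep : ∀ w, P w → ∃ j, P (w ++ [j])) :
    ∃ x : ℕ → Fin m, ∀ n, P (wordTrunc x n) := by
  classical
  let g : {w // P w} → {w // P w} := fun p =>
    ⟨p.1 ++ [Classical.choose (hstep p.1 p.2)], Classical.choose_spec (hstep p.1 p.2)⟩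
  let s : ℕ → {w // P w} := fun n => g^[n] ⟨[], h0⟩
  refine ⟨fun n => Classical.choose (hstep (s n).1 (s n).2), ?_⟩
  have key : ∀ n,
      wordTrunc (fun n => Classical.choose (hstep (s n).1 (s n).2)) n = (s n).1 := by
    intro n
    induction n with
    | zero => rfl
    | succ n ih =>
      rw [wordTrunc_succ, ih]
      have hs : s (n + 1) = g (s n) := Function.iterate_succ_apply' g n _
      rw [hs]
  intro n
  rw [key n]
  exact (s n).2

end Aux

/-- If `(L, (h₁, h₂))` is a backward self-similar system with `m = 2` such that every
`L_x` is connected and `L` is disconnected, then `h₁⁻¹(L) ∩ h₂⁻¹(L) = ∅`, the set of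
connected components of `L` is in bijection with `{1,2}^ℕ`, and in particular `L` has
uncountably many connected components. -/
theorem backward_two_maps_disconnected
    {X : Type*} [MetricSpace X]
    (h : Fin 2 → X → X) (hcont : ∀ j, Continuous (h j))
    (L : Set X) (hLne : L.Nonempty) (hLcp : IsCompact L)
    (hinv : L = ⋃ j, h j ⁻¹' L)
    (hfib : ∀ z ∈ L, ∀ j, (h j ⁻¹' ({z} : Set X)).Nonempty)
    (hconn : ∀ x : ℕ → Fin 2, IsConnected (bwdLimSet h L x))
    (hdis : ¬ IsConnected L) :
    h 0 ⁻¹' L ∩ h 1 ⁻¹' L = ∅ ∧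
    Nonempty ({C : Set X // ∃ y ∈ L, C = connectedComponentIn L y} ≃ (ℕ → Fin 2)) ∧
    ¬ {C : Set X | ∃ y ∈ L, C = connectedComponentIn L y}.Countable := by
  classical
  have hLcl : IsClosed L := hLcp.isClosed
  have hpre_sub : ∀ j : Fin 2, h j ⁻¹' L ⊆ L := by
    intro j
    conv_rhs => rw [hinv]
    exact subset_iUnion (fun j => h j ⁻¹' L) j
  -- basic facts on bwdPre
  have hbsub : ∀ w : List (Fin 2), bwdPre h L w ⊆ L := by
    intro w
    induction w with
    | nil => exact subset_rfl
    | cons a w ih => exact (preimage_mono ih).trans (hpre_sub a)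
  have hbcl : ∀ w : List (Fin 2), IsClosed (bwdPre h L w) := by
    intro w
    induction w with
    | nil => exact hLcl
    | cons a w ih => exact ih.preimage (hcont a)
  have hbcp : ∀ w : List (Fin 2), IsCompact (bwdPre h L w) :=
    fun w => hLcp.of_isClosed_subset (hbcl w) (hbsub w)
  have hbne : ∀ (S : Set X), S.Nonempty → S ⊆ L → ∀ w : List (Fin 2), (bwdPre h S w).Nonempty := by
    intro S hS hSL w
    induction w with
    | nil => exact hS
    | cons a w ih =>
      obtain ⟨y, hy⟩ := ih
      have hyL : y ∈ L := hbsub w (bwdPre_mono h hSL w hy)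
      obtain ⟨z, hz⟩ := hfib y hyL a
      have hz' : h a z = y := hz
      exact ⟨z, by simp only [bwdPre_cons, mem_preimage, hz']; exact hy⟩
  have hinv2 : L = h 0 ⁻¹' L ∪ h 1 ⁻¹' L := by
    conv_lhs => rw [hinv]
    ext p
    simp [Fin.exists_fin_two]
  have hchild : ∀ w : List (Fin 2),
      bwdPre h L w = bwdPre h L (w ++ [0]) ∪ bwdPre h L (w ++ [1]) := by
    intro w
    rw [bwdPre_append, bwdPre_append]
    have h0 : bwdPre h L [(0 : Fin 2)] = h 0 ⁻¹' L := rfl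
    have h1 : bwdPre h L [(1 : Fin 2)] = h 1 ⁻¹' L := rfl
    rw [h0, h1, ← bwdPre_union]
    conv_lhs => rw [hinv2]
  have hmem : ∀ (x : ℕ → Fin 2) (y : X),
      y ∈ bwdLimSet h L x ↔ ∀ j, y ∈ bwdPre h L (wordTrunc x (j + 1)) := by
    intro x y
    simp [bwdLimSet]
  have hlimsub : ∀ x : ℕ → Fin 2, bwdLimSet h L x ⊆ L := by
    intro x p hp
    exact hbsub _ ((hmem x p).1 hp 0)
  -- separation of L into two disjoint nonempty compact pieces
  have hnc : ¬ IsPreconnected L := fun hp => hdis ⟨hLne, hp⟩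
  rw [IsPreconnected] at hnc
  push_neg at hnc
  obtain ⟨u, v, hu, hv, hLuv, hLu, hLv, hLuve⟩ := hnc
  have hno : ∀ ⦃p : X⦄, p ∈ L → p ∈ u → p ∈ v → False := by
    intro p h1 h2 h3
    have : p ∈ L ∩ (u ∩ v) := ⟨h1, h2, h3⟩
    rw [hLuve] at this
    exact this
  set U : Set X := L \ v with hUdef
  set V : Set X := L \ u with hVdef
  have hUeq : L ∩ u = U := by
    ext p
    constructor
    · rintro ⟨hpL, hpu⟩
      exact ⟨hpL, fun hpv => hno hpL hpu hpv⟩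
    · rintro ⟨hpL, hpv⟩
      exact ⟨hpL, (hLuv hpL).resolve_right hpv⟩
  have hVeq : L ∩ v = V := by
    ext p
    constructor
    · rintro ⟨hpL, hpv⟩
      exact ⟨hpL, fun hpu => hno hpL hpu hpv⟩
    · rintro ⟨hpL, hpu⟩
      exact ⟨hpL, (hLuv hpL).resolve_left hpu⟩
  have hUcl : IsClosed U := hLcl.sdiff hv
  have hVcl : IsClosed V := hLcl.sdiff hu
  have hUcp : IsCompact U := hLcp.of_isClosed_subset hUcl diff_subset
  have hVcp : IsCompact V := hLcp.of_isClosed_subset hVcl diff_subset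
  have hUVn : ∀ ⦃p : X⦄, p ∈ U → p ∈ V → False := by
    rintro p ⟨hpL, hpv⟩ ⟨_, hpu⟩
    exact hpu ((hLuv hpL).resolve_right hpv)
  have hUu : U ⊆ u := fun p hp => (hLuv hp.1).resolve_right hp.2
  have hVv : V ⊆ v := fun p hp => (hLuv hp.1).resolve_left hp.2
  have hUVL : U ∪ V = L := by
    apply Subset.antisymm (union_subset diff_subset diff_subset)
    intro p hpL
    rcases hLuv hpL with hpu | hpv
    · exact Or.inl ⟨hpL, fun hpv => hno hpL hpu hpv⟩
    · exact Or.inr ⟨hpL, fun hpu => hno hpL hpu hpv⟩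
  have hUne : U.Nonempty := hUeq ▸ hLu
  have hVne : V.Nonempty := hVeq ▸ hLv
  -- Step 1: the two preimages are disjoint
  have hsep : h 0 ⁻¹' L ∩ h 1 ⁻¹' L = ∅ := by
    by_contra hne
    obtain ⟨z, hz⟩ := nonempty_iff_ne_empty.2 hne
    have hzL : z ∈ L := hpre_sub 0 hz.1
    set P : List (Fin 2) → Prop :=
      fun w => (bwdPre h L w ∩ U).Nonempty ∧ (bwdPre h L w ∩ V).Nonempty with hPdef
    have hP0 : P [] := by
      refine ⟨?_, ?_⟩
      · obtain ⟨p, hp⟩ := hUne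
        exact ⟨p, hp.1, hp⟩
      · obtain ⟨p, hp⟩ := hVne
        exact ⟨p, hp.1, hp⟩
    have hstep : ∀ w, P w → ∃ j, P (w ++ [j]) := by
      intro w hw
      by_contra hcon
      push_neg at hcon
      -- the two children meet
      have htne : (bwdPre h L (w ++ [0]) ∩ bwdPre h L (w ++ [1])).Nonempty := by
        rw [bwdPre_append, bwdPre_append, ← bwdPre_inter]
        exact hbne _ ⟨z, hz⟩ (fun p hp => hpre_sub 0 hp.1) w
      obtain ⟨t, ht0, ht1⟩ := htne
      -- each child lies entirely in U or in V
      have hside : ∀ j : Fin 2, bwdPre h L (w ++ [j]) ⊆ U ∨ bwdPre h L (w ++ [j]) ⊆ V := by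
        intro j
        rcases not_and_or.1 (hcon j) with hj | hj
        · right
          intro p hp
          have hpL : p ∈ L := hbsub _ hp
          rcases (hUVL ▸ hpL : p ∈ U ∪ V) with hpU | hpV
          · exact absurd ⟨p, hp, hpU⟩ hj
          · exact hpV
        · left
          intro p hp
          have hpL : p ∈ L := hbsub _ hp
          rcases (hUVL ▸ hpL : p ∈ U ∪ V) with hpU | hpV
          · exact hpU
          · exact absurd ⟨p, hp, hpV⟩ hj
      rcases hside 0 with h0U | h0V <;> rcases hside 1 with h1U | h1V
      · -- both children in U, but bwdPre h L w meets V
        obtain ⟨q, hq, hqV⟩ := hw.2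
        rcases (hchild w ▸ hq : q ∈ _ ∪ _) with hq0 | hq1
        · exact hUVn (h0U hq0) hqV
        · exact hUVn (h1U hq1) hqV
      · exact hUVn (h0U ht0) (h1V ht1)
      · exact hUVn (h1U ht1) (h0V ht0)
      · -- both children in V, but bwdPre h L w meets U
        obtain ⟨q, hq, hqU⟩ := hw.1
        rcases (hchild w ▸ hq : q ∈ _ ∪ _) with hq0 | hq1
        · exact hUVn hqU (h0V hq0)
        · exact hUVn hqU (h1V hq1)
    obtain ⟨x, hx⟩ := exists_word_seq P hP0 hstep
    have hmono : ∀ n : ℕ, bwdPre h L (wordTrunc x (n + 1)) ⊆ bwdPre h L (wordTrunc x n) := by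
      intro n
      rw [wordTrunc_succ, bwdPre_append]
      exact bwdPre_mono h ((hbsub [x n]).trans subset_rfl) _
    have hUpt : (bwdLimSet h L x ∩ U).Nonempty := by
      have := IsCompact.nonempty_iInter_of_sequence_nonempty_isCompact_isClosed
        (fun n => bwdPre h L (wordTrunc x n) ∩ U)
        (fun n => inter_subset_inter_left U (hmono n))
        (fun n => (hx n).1)
        ((hbcp _).inter_right hUcl)
        (fun n => (hbcl _).inter hUcl)
      obtain ⟨p, hp⟩ := this
      simp only [mem_iInter, mem_inter_iff] at hp
      exact ⟨p, (hmem x p).2 fun j => (hp (j + 1)).1, (hp 0).2⟩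
    have hVpt : (bwdLimSet h L x ∩ V).Nonempty := by
      have := IsCompact.nonempty_iInter_of_sequence_nonempty_isCompact_isClosed
        (fun n => bwdPre h L (wordTrunc x n) ∩ V)
        (fun n => inter_subset_inter_left V (hmono n))
        (fun n => (hx n).2)
        ((hbcp _).inter_right hVcl)
        (fun n => (hbcl _).inter hVcl)
      obtain ⟨p, hp⟩ := this
      simp only [mem_iInter, mem_inter_iff] at hp
      exact ⟨p, (hmem x p).2 fun j => (hp (j + 1)).1, (hp 0).2⟩
    obtain ⟨q, hq⟩ := (hconn x).isPreconnected u v hu hv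
      ((hlimsub x).trans hLuv)
      (hUpt.mono (inter_subset_inter_right _ hUu))
      (hVpt.mono (inter_subset_inter_right _ hVv))
    exact hno (hlimsub x hq.1) hq.2.1 hq.2.2
  -- sibling disjointness
  have hdisj : ∀ w : List (Fin 2), bwdPre h L (w ++ [0]) ∩ bwdPre h L (w ++ [1]) = ∅ := by
    intro w
    rw [bwdPre_append, bwdPre_append, ← bwdPre_inter]
    have h0 : bwdPre h L [(0 : Fin 2)] = h 0 ⁻¹' L := rfl
    have h1 : bwdPre h L [(1 : Fin 2)] = h 1 ⁻¹' L := rfl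
    rw [h0, h1, hsep, bwdPre_empty]
  have hdisj' : ∀ (w : List (Fin 2)) (j j' : Fin 2), j ≠ j' →
      bwdPre h L (w ++ [j]) ∩ bwdPre h L (w ++ [j']) = ∅ := by
    intro w j j' hjj'
    have hall : ∀ a b : Fin 2, a ≠ b → (a = 0 ∧ b = 1) ∨ (a = 1 ∧ b = 0) := by decide
    have hcases : (j = 0 ∧ j' = 1) ∨ (j = 1 ∧ j' = 0) := hall j j' hjj'
    rcases hcases with ⟨rfl, rfl⟩ | ⟨rfl, rfl⟩
    · exact hdisj w
    · rw [inter_comm]; exact hdisj w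
  -- a preconnected subset of the union of two disjoint compacts meeting the first lies in it
  have hsepc : ∀ K1 K2 C : Set X, IsCompact K1 → IsCompact K2 → K1 ∩ K2 = ∅ →
      IsPreconnected C → C ⊆ K1 ∪ K2 → (C ∩ K1).Nonempty → C ⊆ K1 := by
    intro K1 K2 C hc1 hc2 hd hC hsub hne
    obtain ⟨u', v', hu', hv', hK1u, hK2v, huv'⟩ :=
      SeparatedNhds.of_isCompact_isCompact hc1 hc2 (disjoint_iff_inter_eq_empty.2 hd)
    have hCu : C ⊆ u' :=
      hC.subset_left_of_subset_union hu' hv' huv'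
        (hsub.trans (union_subset_union hK1u hK2v))
        (hne.mono (inter_subset_inter_right _ hK1u))
    intro p hp
    rcases hsub hp with hp1 | hp2
    · exact hp1
    · exact absurd rfl (huv'.ne_of_mem (hCu hp) (hK2v hp2))
  -- the component of any point of L_x equals L_x
  have hcompsub : ∀ (x : ℕ → Fin 2) (y : X), y ∈ bwdLimSet h L x →
      ∀ k, connectedComponentIn L y ⊆ bwdPre h L (wordTrunc x k) := by
    intro x y hy k
    have hyL : y ∈ L := hlimsub x hy
    induction k with
    | zero => exact connectedComponentIn_subset L y
    | succ k ih =>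
      rw [wordTrunc_succ]
      have hyk : y ∈ bwdPre h L (wordTrunc x k ++ [x k]) := by
        rw [← wordTrunc_succ]
        exact (hmem x y).1 hy k
      have hCsub : connectedComponentIn L y ⊆
          bwdPre h L (wordTrunc x k ++ [0]) ∪ bwdPre h L (wordTrunc x k ++ [1]) := by
        rw [← hchild]
        exact ih
      have hall : ∀ j : Fin 2, j = 0 ∨ j = 1 := by decide
      have hfin : (x k) = 0 ∨ (x k) = 1 := hall (x k)
      rcases hfin with h0 | h1
      · rw [h0]
        refine hsepc _ _ _ (hbcp _) (hbcp _) (hdisj _)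
          isPreconnected_connectedComponentIn hCsub
          ⟨y, mem_connectedComponentIn hyL, ?_⟩
        rw [← h0]; exact hyk
      · rw [h1]
        refine hsepc _ _ _ (hbcp _) (hbcp _)
          (by rw [inter_comm]; exact hdisj _)
          isPreconnected_connectedComponentIn
          (by rw [union_comm] at hCsub; exact hCsub)
          ⟨y, mem_connectedComponentIn hyL, ?_⟩
        rw [← h1]; exact hyk
  have hcompeq : ∀ (x : ℕ → Fin 2) (y : X), y ∈ bwdLimSet h L x →
      connectedComponentIn L y = bwdLimSet h L x := by
    intro x y hy
    apply Subset.antisymm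
    · intro p hp
      exact (hmem x p).2 fun j => hcompsub x y hy (j + 1) hp
    · exact (hconn x).isPreconnected.subset_connectedComponentIn hy (hlimsub x)
  -- coding of points
  have hcode : ∀ y ∈ L, ∃ x : ℕ → Fin 2, y ∈ bwdLimSet h L x := by
    intro y hyL
    have hstep : ∀ w : List (Fin 2), y ∈ bwdPre h L w → ∃ j, y ∈ bwdPre h L (w ++ [j]) := by
      intro w hw
      rw [hchild w] at hw
      rcases hw with hw | hw
      · exact ⟨0, hw⟩
      · exact ⟨1, hw⟩
    obtain ⟨x, hx⟩ := exists_word_seq (fun w => y ∈ bwdPre h L w) hyL hstep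
    exact ⟨x, (hmem x y).2 fun j => hx (j + 1)⟩
  -- injectivity of x ↦ L_x
  have hinj : ∀ x x' : ℕ → Fin 2, bwdLimSet h L x = bwdLimSet h L x' → x = x' := by
    intro x x' he
    obtain ⟨y, hy⟩ := (hconn x).nonempty
    have hy' : y ∈ bwdLimSet h L x' := he ▸ hy
    have key : ∀ k, wordTrunc x k = wordTrunc x' k := by
      intro k
      induction k with
      | zero => rfl
      | succ k ih =>
        rw [wordTrunc_succ, wordTrunc_succ, ih]
        congr 1
        by_contra hne
        have hne' : x k ≠ x' k := fun hh => hne (by rw [hh])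
        have h1 : y ∈ bwdPre h L (wordTrunc x' k ++ [x k]) := by
          rw [← ih, ← wordTrunc_succ]
          exact (hmem x y).1 hy k
        have h2 : y ∈ bwdPre h L (wordTrunc x' k ++ [x' k]) := by
          rw [← wordTrunc_succ]
          exact (hmem x' y).1 hy' k
        have := hdisj' (wordTrunc x' k) (x k) (x' k) hne'
        have hmem2 : y ∈ bwdPre h L (wordTrunc x' k ++ [x k]) ∩
            bwdPre h L (wordTrunc x' k ++ [x' k]) := ⟨h1, h2⟩
        rw [this] at hmem2
        exact hmem2
    funext k
    have hk := key (k + 1)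
    rw [wordTrunc_succ, wordTrunc_succ, key k] at hk
    have := List.append_cancel_left hk
    simpa using this
  -- assemble
  have hφ : ∀ x : ℕ → Fin 2, ∃ y ∈ L, bwdLimSet h L x = connectedComponentIn L y := by
    intro x
    obtain ⟨y, hy⟩ := (hconn x).nonempty
    exact ⟨y, hlimsub x hy, (hcompeq x y hy).symm⟩
  let φ : (ℕ → Fin 2) → {C : Set X // ∃ y ∈ L, C = connectedComponentIn L y} :=
    fun x => ⟨bwdLimSet h L x, hφ x⟩
  have hbij : Function.Bijective φ := by
    constructor
    · intro x x' he
      exact hinj x x' (congrArg Subtype.val he)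
    · rintro ⟨C, y, hyL, rfl⟩
      obtain ⟨x, hx⟩ := hcode y hyL
      exact ⟨x, Subtype.ext (hcompeq x y hx).symm⟩
  have e : {C : Set X // ∃ y ∈ L, C = connectedComponentIn L y} ≃ (ℕ → Fin 2) :=
    (Equiv.ofBijective φ hbij).symm
  refine ⟨hsep, ⟨e⟩, ?_⟩
  intro hcnt
  have hc1 : Countable {C : Set X // ∃ y ∈ L, C = connectedComponentIn L y} := hcnt.to_subtype
  have hc2 : Countable (ℕ → Fin 2) := Countable.of_equiv _ e
  obtain ⟨f, hf⟩ := exists_surjective_nat (ℕ → Fin 2)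
  obtain ⟨n, hn⟩ := hf (fun n => if f n n = 0 then 1 else 0)
  have hd := congrFun hn n
  by_cases h0 : f n n = 0 <;> simp [h0] at hd
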